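/- Let T be a finite tree with at least two vertices, equipped with an edge-length function ℓ assigning a strictly positive real length to each edge, and suppose (T, ℓ) is short-branched. Then for every vertex v of T, the sum over all leaves w of T of the barycentric coordinates a(v,w) equals 1. -/

import Mathlib

open scoped Classical
open Finset

noncomputable section

variable {V : Type*}

/-- A leaf of a graph is a vertex of degree one. -/
def IsLeafVertex [Fintype V] (G : SimpleGraph V) (v : V) : Prop := G.degree v = 1

/-- The finset of leaves of a graph. -/
def leafSet [Fintype V] (G : SimpleGraph V) : Finset V :=
  Finset.univ.filter (fun v => IsLeafVertex G v)

/-- The length of a pseudometric graph: the sum of the lengths of its edges. -/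
def totalLength [Fintype V] (G : SimpleGraph V) (ℓ : Sym2 V → ℝ) : ℝ :=
  ∑ e ∈ G.edgeFinset, ℓ e

/-- The leaf length of a tree: one less than its number of leaves. -/
def leafLength [Fintype V] (G : SimpleGraph V) : ℝ := ((leafSet G).card : ℝ) - 1

/-- `sideComp G u v` is the vertex set of the connected component containing `v` of the
graph obtained from `G` by deleting the vertex `u`: the set of vertices reachable from
`v` by a walk avoiding `u`. -/
def sideComp (G : SimpleGraph V) (u v : V) : Set V :=
  {x | ∃ p : G.Walk v x, u ∉ p.support}

/-- The length of the subspace `T(u,v)`: the sum of the lengths of all edges having at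
least one endpoint in `sideComp G u v`. -/
def sideLength [Fintype V] (G : SimpleGraph V) (ℓ : Sym2 V → ℝ) (u v : V) : ℝ :=
  ∑ e ∈ G.edgeFinset.filter (fun e => ∃ x ∈ e, x ∈ sideComp G u v), ℓ e

/-- The leaf length of the subspace `T(u,v)`: the number of leaves of `G` lying in
`sideComp G u v`. -/
def sideLeafCount [Fintype V] (G : SimpleGraph V) (u v : V) : ℕ :=
  ((leafSet G).filter (fun x => x ∈ sideComp G u v)).card

/-- The deviation `D(u,v)`: the leaf length of `T(u,v)` minus the length of `T(u,v)`. -/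
def deviation [Fintype V] (G : SimpleGraph V) (ℓ : Sym2 V → ℝ) (u v : V) : ℝ :=
  (sideLeafCount G u v : ℝ) - sideLength G ℓ u v

/-- The length of the branch at `(u,w)`: `ℓ {u,w}` plus the sum of the lengths of all
edges with both endpoints in `sideComp G u w`. -/
def branchLength [Fintype V] (G : SimpleGraph V) (ℓ : Sym2 V → ℝ) (u w : V) : ℝ :=
  ℓ s(u, w) + ∑ e ∈ G.edgeFinset.filter (fun e => ∀ x ∈ e, x ∈ sideComp G u w), ℓ e

/-- A pseudometric tree is short-branched if its length equals its leaf length and the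
length of every branch (at a vertex of degree at least 3) is at most its leaf length. -/
def ShortBranched [Fintype V] (G : SimpleGraph V) (ℓ : Sym2 V → ℝ) : Prop :=
  totalLength G ℓ = leafLength G ∧
  ∀ u w : V, 3 ≤ G.degree u → G.Adj u w →
    branchLength G ℓ u w ≤ (sideLeafCount G u w : ℝ)

/-- The product of the factors `D(vᵢ, vᵢ₊₁)/(1 − D(vᵢ₊₁, vᵢ))` along a list of vertices;
applied to the support of the unique path from `v` to `w` this gives the barycentric
coordinate `a(v,w)`. -/
def pathProd [Fintype V] (G : SimpleGraph V) (ℓ : Sym2 V → ℝ) : List V → ℝ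
  | a :: b :: rest =>
      (deviation G ℓ a b / (1 - deviation G ℓ b a)) * pathProd G ℓ (b :: rest)
  | _ => 1

/-! The identities `∑_{x ~ u} D(u,x) = 1 - [u is a leaf]` and `D(u,v) + D(v,u) = 1 - ℓ(uv)` come
from counting the leaves and the edges on the sides of a vertex or of an edge, using that the
length of the tree equals its leaf length. Together with the short-branched condition they give
`D(u,v) ≥ 0` (by induction along chains of degree-two vertices), so the denominators
`1 - D(v,u) = D(u,v) + ℓ(uv)` are positive. By induction on the size of the side `C(u,v)`, the
coordinates `a(u,w)` of the leaves `w` beyond `v` then sum to `D(u,v)`: they factor as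
`D(u,v)/(1 - D(v,u))` times the coordinates `a(v,w)`, whose sum splits over the other
neighbours `y` of `v` into `[v is a leaf] + ∑ D(v,y) = 1 - D(v,u)`. Summing over the neighbours
of `v` gives the theorem. -/

open SimpleGraph

section Sides

variable {G : SimpleGraph V} {u v x y : V}

variable (G u v) in
theorem notMem_sideComp : u ∉ sideComp G u v :=
  fun ⟨p, hp⟩ => hp p.end_mem_support

theorem start_mem_sideComp (h : u ≠ v) : v ∈ sideComp G u v :=
  ⟨.nil, by simpa using h⟩

theorem mem_sideComp_of_mem_support {w : V} (p : G.Walk v w) (hp : u ∉ p.support)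
    (hx : x ∈ p.support) : x ∈ sideComp G u v :=
  ⟨p.takeUntil x hx, fun h => hp (p.support_takeUntil_subset_support hx h)⟩

theorem mem_sideComp_of_adj (hx : x ∈ sideComp G u v) (hxy : G.Adj x y) (hyu : y ≠ u) :
    y ∈ sideComp G u v := by
  obtain ⟨p, hp⟩ := hx
  refine ⟨p.concat hxy, ?_⟩
  simp [Walk.support_concat, hp, hyu.symm]

theorem SimpleGraph.Reachable.exists_adj_mem_sideComp (h : G.Reachable u x) (hux : u ≠ x) :
    ∃ y, G.Adj u y ∧ x ∈ sideComp G u y := by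
  obtain ⟨p⟩ := h
  have hp := p.bypass_isPath
  cases hq : p.bypass with
  | nil => exact absurd rfl hux
  | cons hy q =>
    rw [hq, Walk.cons_isPath_iff] at hp
    exact ⟨_, hy, q, hp.2⟩

theorem mem_leafSet [Fintype V] : v ∈ leafSet G ↔ G.degree v = 1 :=
  mem_filter.trans (and_iff_right (mem_univ v))

end Sides

namespace SimpleGraph.IsTree

variable {G : SimpleGraph V} (hT : G.IsTree) {a b u v w x y : V}
include hT

def path (a b : V) : G.Walk a b :=
  (hT.existsUnique_path a b).exists.choose

theorem isPath_path (a b : V) : (hT.path a b).IsPath :=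
  (hT.existsUnique_path a b).exists.choose_spec

theorem eq_path {p : G.Walk a b} (hp : p.IsPath) : p = hT.path a b :=
  (hT.existsUnique_path a b).unique hp (hT.isPath_path a b)

theorem path_self (a : V) : hT.path a a = .nil :=
  (hT.eq_path .nil).symm

theorem mem_sideComp_iff : x ∈ sideComp G u v ↔ u ∉ (hT.path v x).support := by
  refine ⟨fun ⟨p, hp⟩ => ?_, fun h => ⟨_, h⟩⟩
  rw [← hT.eq_path p.bypass_isPath]
  exact fun h => hp (p.support_bypass_subset_support h)

theorem path_eq_cons (h : G.Adj b y) (hx : x ∈ sideComp G b y) :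
    hT.path b x = .cons h (hT.path y x) :=
  (hT.eq_path ((hT.isPath_path y x).cons ((hT.mem_sideComp_iff).1 hx))).symm

theorem disjoint_sideComp (ha : G.Adj u a) (hb : G.Adj u b) (hab : a ≠ b) :
    Disjoint (sideComp G u a) (sideComp G u b) := by
  refine Set.disjoint_left.2 fun x hxa hxb => hab ?_
  have := (hT.path_eq_cons ha hxa).symm.trans (hT.path_eq_cons hb hxb)
  simpa using congrArg Walk.snd this

theorem eq_of_adj_of_mem_sideComp (ha : G.Adj u a) (hv : G.Adj u v)
    (h : a ∈ sideComp G u v) : a = v := by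
  by_contra hne
  exact Set.disjoint_left.1 (hT.disjoint_sideComp ha hv hne) (start_mem_sideComp ha.ne) h

theorem sideComp_subset (hy : G.Adj u y) (hv : G.Adj u v) (hyv : y ≠ v) :
    sideComp G u y ⊆ sideComp G v u := by
  rintro x ⟨q, hq⟩
  refine ⟨.cons hy q, ?_⟩
  rw [Walk.support_cons, List.mem_cons, not_or]
  refine ⟨hv.ne', fun hvq => ?_⟩
  exact Set.disjoint_left.1 (hT.disjoint_sideComp hy hv hyv)
    (mem_sideComp_of_mem_support q hq hvq) (start_mem_sideComp hv.ne)

theorem mem_sideComp_swap_iff (h : G.Adj u v) : x ∈ sideComp G v u ↔ x ∉ sideComp G u v := by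
  constructor
  · intro hvu huv
    have := (hT.mem_sideComp_iff).1 hvu
    rw [hT.path_eq_cons h huv] at this
    exact this (by simp)
  · intro hx
    by_cases hxu : x = u
    · rw [hxu]; exact start_mem_sideComp h.ne'
    obtain ⟨y, hy, hxy⟩ := (hT.connected.preconnected u x).exists_adj_mem_sideComp (Ne.symm hxu)
    exact hT.sideComp_subset hy h (by rintro rfl; exact hx hxy) hxy

theorem mem_sideComp_or_eq (h : G.Adj u v) (hab : G.Adj a b) (ha : a ∈ sideComp G u v) :
    b ∈ sideComp G u v ∨ s(a, b) = s(u, v) := by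
  by_cases hb : b = u
  · subst hb
    rw [hT.eq_of_adj_of_mem_sideComp hab.symm h ha, Sym2.eq_swap]
    exact Or.inr rfl
  · exact Or.inl (mem_sideComp_of_adj ha hab hb)

theorem sum_filter_sideComp_add_sum_filter_sideComp {M : Type*} [AddCommMonoid M]
    (h : G.Adj u v) (s : Finset V) (f : V → M) :
    ∑ w ∈ s.filter (· ∈ sideComp G u v), f w + ∑ w ∈ s.filter (· ∈ sideComp G v u), f w =
      ∑ w ∈ s, f w := by
  simp_rw [hT.mem_sideComp_swap_iff h]
  exact sum_filter_add_sum_filter_not s _ f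

theorem ncard_sideComp_lt [Finite V] (hub : G.Adj u b) (hby : G.Adj b y) (hyu : y ≠ u) :
    (sideComp G b y).ncard < (sideComp G u b).ncard :=
  Set.ncard_lt_ncard <| (Set.ssubset_iff_of_subset (hT.sideComp_subset hby hub.symm hyu)).2
    ⟨b, start_mem_sideComp hub.ne, notMem_sideComp G b y⟩

variable [Fintype V] {ℓ : Sym2 V → ℝ}

theorem sum_eq_add_sum_sum_filter_sideComp {M : Type*} [AddCommMonoid M] (u : V) (s : Finset V)
    (f : V → M) :
    ∑ w ∈ s, f w = (if u ∈ s then f u else 0) +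
      ∑ y ∈ G.neighborFinset u, ∑ w ∈ s.filter (· ∈ sideComp G u y), f w := by
  have hcover : s.erase u =
      (G.neighborFinset u).biUnion (fun y => s.filter (· ∈ sideComp G u y)) := by
    ext w
    simp only [mem_erase, mem_biUnion, mem_filter, mem_neighborFinset]
    constructor
    · rintro ⟨hwu, hw⟩
      obtain ⟨y, hy, hwy⟩ := (hT.connected.preconnected u w).exists_adj_mem_sideComp hwu.symm
      exact ⟨y, hy, hw, hwy⟩
    · rintro ⟨y, -, hw, hwy⟩
      exact ⟨fun h => notMem_sideComp G u y (h ▸ hwy), hw⟩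
  have hdisj : (G.neighborFinset u : Set V).PairwiseDisjoint
      (fun y => s.filter (· ∈ sideComp G u y)) := fun x hx y hy hxy =>
    disjoint_filter.2 fun _ _ hwx hwy => Set.disjoint_left.1 (hT.disjoint_sideComp
      ((G.mem_neighborFinset _ _).1 hx) ((G.mem_neighborFinset _ _).1 hy) hxy) hwx hwy
  rw [← sum_biUnion hdisj, ← hcover]
  split_ifs with hu
  exacts [(add_sum_erase s f hu).symm, by rw [erase_eq_of_notMem hu, zero_add]]

theorem sideLength_eq_branchLength (h : G.Adj u v) :
    sideLength G ℓ u v = branchLength G ℓ u v := by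
  have hedges : G.edgeFinset.filter (fun e => ∃ x ∈ e, x ∈ sideComp G u v) =
      insert s(u, v) (G.edgeFinset.filter (fun e => ∀ x ∈ e, x ∈ sideComp G u v)) := by
    ext e
    induction e using Sym2.ind with | _ a b => ?_
    simp only [mem_filter, mem_insert, mem_edgeFinset, mem_edgeSet, Sym2.mem_iff,
      exists_eq_or_imp, exists_eq_left, forall_eq_or_imp, forall_eq]
    constructor
    · rintro ⟨hab, ha | hb⟩
      · rcases hT.mem_sideComp_or_eq h hab ha with hb | he
        exacts [Or.inr ⟨hab, ha, hb⟩, Or.inl he]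
      · rcases hT.mem_sideComp_or_eq h hab.symm hb with ha | he
        exacts [Or.inr ⟨hab, ha, hb⟩, Or.inl (Sym2.eq_swap.trans he)]
    · rintro (he | ⟨hab, ha, -⟩)
      · rcases Sym2.eq_iff.1 he with ⟨rfl, rfl⟩ | ⟨rfl, rfl⟩
        exacts [⟨h, Or.inr (start_mem_sideComp h.ne)⟩, ⟨h.symm, Or.inl (start_mem_sideComp h.ne)⟩]
      · exact ⟨hab, Or.inl ha⟩
  have hout : s(u, v) ∉ G.edgeFinset.filter (fun e => ∀ x ∈ e, x ∈ sideComp G u v) := by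
    simp [notMem_sideComp]
  rw [sideLength, branchLength, hedges, sum_insert hout]

theorem sideLength_add_sideLength (h : G.Adj u v) :
    sideLength G ℓ u v + sideLength G ℓ v u = totalLength G ℓ + ℓ s(u, v) := by
  have hsplit := sum_filter_add_sum_filter_not G.edgeFinset
    (fun e => ∃ x ∈ e, x ∈ sideComp G u v) ℓ
  simp_rw [not_exists, not_and, ← hT.mem_sideComp_swap_iff h] at hsplit
  rw [hT.sideLength_eq_branchLength h.symm, branchLength, Sym2.eq_swap, sideLength, totalLength,
    ← hsplit]
  ring

theorem disjoint_filter_exists_mem_sideComp {x y : V} (hx : G.Adj u x) (hy : G.Adj u y)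
    (hxy : x ≠ y) :
    Disjoint (G.edgeFinset.filter (fun e => ∃ z ∈ e, z ∈ sideComp G u x))
      (G.edgeFinset.filter (fun e => ∃ z ∈ e, z ∈ sideComp G u y)) := by
  have hdisj := hT.disjoint_sideComp hx hy hxy
  refine Finset.disjoint_left.2 fun e he he' => ?_
  obtain ⟨he, z, hz, hzx⟩ := mem_filter.1 he
  obtain ⟨-, z', hz', hzy⟩ := mem_filter.1 he'
  have hne : z ≠ z' := fun hzz => Set.disjoint_left.1 hdisj hzx (hzz ▸ hzy)
  have hadj : G.Adj z z' := by
    rw [← mem_edgeSet, ← (Sym2.mem_and_mem_iff hne).1 ⟨hz, hz'⟩]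
    exact mem_edgeFinset.1 he
  have hz'u : z' ≠ u := fun h => notMem_sideComp G u y (h ▸ hzy)
  exact Set.disjoint_left.1 hdisj (mem_sideComp_of_adj hzx hadj hz'u) hzy

theorem sum_sideLength (u : V) :
    ∑ x ∈ G.neighborFinset u, sideLength G ℓ u x = totalLength G ℓ := by
  have hcover : (G.neighborFinset u).biUnion
      (fun x => G.edgeFinset.filter (fun e => ∃ z ∈ e, z ∈ sideComp G u x)) = G.edgeFinset := by
    refine (biUnion_subset.2 fun _ _ => filter_subset _ _).antisymm fun e he => ?_
    induction e using Sym2.ind with | _ a b => ?_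
    have hab : G.Adj a b := mem_edgeFinset.1 he
    obtain ⟨z, hz, hzu⟩ : ∃ z ∈ s(a, b), u ≠ z := by
      by_cases ha : u = a
      · exact ⟨b, Sym2.mem_mk_right a b, ha ▸ hab.ne⟩
      · exact ⟨a, Sym2.mem_mk_left a b, ha⟩
    obtain ⟨y, hy, hzy⟩ := (hT.connected.preconnected u z).exists_adj_mem_sideComp hzu
    exact mem_biUnion.2 ⟨y, (G.mem_neighborFinset _ _).2 hy, mem_filter.2 ⟨he, z, hz, hzy⟩⟩
  rw [totalLength, ← hcover, sum_biUnion]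
  · rfl
  · intro x hx y hy hxy
    exact hT.disjoint_filter_exists_mem_sideComp ((G.mem_neighborFinset _ _).1 hx)
      ((G.mem_neighborFinset _ _).1 hy) hxy

end SimpleGraph.IsTree

namespace SimpleGraph.IsTree

variable [Fintype V] {G : SimpleGraph V} (hT : G.IsTree) {ℓ : Sym2 V → ℝ}
include hT

theorem sum_deviation (hlen : totalLength G ℓ = leafLength G) (u : V) :
    ∑ x ∈ G.neighborFinset u, deviation G ℓ u x = 1 - if u ∈ leafSet G then 1 else 0 := by
  have hcount := hT.sum_eq_add_sum_sum_filter_sideComp u (leafSet G) (fun _ => (1 : ℝ))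
  simp only [sum_const, nsmul_eq_mul, mul_one] at hcount
  simp only [deviation, sideLeafCount, sum_sub_distrib, hT.sum_sideLength, hlen, leafLength]
  linarith

theorem deviation_add_deviation {u v : V} (hlen : totalLength G ℓ = leafLength G) (h : G.Adj u v) :
    deviation G ℓ u v + deviation G ℓ v u = 1 - ℓ s(u, v) := by
  have hcount := hT.sum_filter_sideComp_add_sum_filter_sideComp h (leafSet G) (fun _ => (1 : ℝ))
  simp only [sum_const, nsmul_eq_mul, mul_one] at hcount
  have hlength := hT.sideLength_add_sideLength (ℓ := ℓ) h
  rw [hlen, leafLength] at hlength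
  simp only [deviation, sideLeafCount]
  linarith

theorem deviation_eq_zero_of_degree_eq_one {a b : V} (hlen : totalLength G ℓ = leafLength G)
    (ha : G.degree a = 1) (hab : G.Adj a b) : deviation G ℓ a b = 0 := by
  have hN : G.neighborFinset a = {b} := by
    obtain ⟨c, hc⟩ := card_eq_one.1 ((G.card_neighborFinset_eq_degree a).trans ha)
    have hb := (G.mem_neighborFinset a b).2 hab
    rw [hc, mem_singleton] at hb
    rw [hc, hb]
  have hsum := hT.sum_deviation hlen a
  rw [hN, sum_singleton, if_pos (mem_leafSet.2 ha)] at hsum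
  linarith

theorem deviation_nonneg {a b : V} (hℓ : ∀ e ∈ G.edgeSet, 0 ≤ ℓ e) (hsb : ShortBranched G ℓ)
    (hab : G.Adj a b) : 0 ≤ deviation G ℓ a b := by
  have hdeg : 0 < G.degree a :=
    G.card_neighborFinset_eq_degree a ▸ card_pos.2 ⟨b, (G.mem_neighborFinset a b).2 hab⟩
  rcases (by omega : G.degree a = 1 ∨ G.degree a = 2 ∨ 3 ≤ G.degree a) with h1 | h2 | h3
  · exact (hT.deviation_eq_zero_of_degree_eq_one hsb.1 h1 hab).ge
  · -- through a vertex of degree two, `D(a, b) = ℓ(a, w) + D(w, a)` with `w` the other neighbour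
    have hcard : (G.neighborFinset a).card = 2 := (G.card_neighborFinset_eq_degree a).trans h2
    obtain ⟨w, hw, hwb⟩ := exists_mem_ne (hcard ▸ one_lt_two) b
    have haw := (G.mem_neighborFinset a w).1 hw
    have hN : G.neighborFinset a = {b, w} := (eq_of_subset_of_card_le
      (insert_subset ((G.mem_neighborFinset a b).2 hab) (singleton_subset_iff.2 hw))
      (by rw [hcard, card_pair hwb.symm])).symm
    have hsum := hT.sum_deviation hsb.1 a
    rw [hN, sum_pair hwb.symm, if_neg (by rw [mem_leafSet, h2]; decide)] at hsum
    have hpair := hT.deviation_add_deviation hsb.1 haw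
    have hwa := deviation_nonneg hℓ hsb haw.symm
    have hℓaw := hℓ _ (G.mem_edgeSet.2 haw)
    linarith
  · have hbranch := hsb.2 a b h3 hab
    rw [deviation, hT.sideLength_eq_branchLength hab]
    linarith
termination_by (sideComp G b a).ncard
decreasing_by exact hT.ncard_sideComp_lt hab.symm haw hwb

theorem one_sub_deviation_pos {a b : V} (hℓ : ∀ e ∈ G.edgeSet, 0 < ℓ e) (hsb : ShortBranched G ℓ)
    (hab : G.Adj a b) : 0 < 1 - deviation G ℓ b a := by
  have hpair := hT.deviation_add_deviation hsb.1 hab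
  have hnonneg := hT.deviation_nonneg (fun e he => (hℓ e he).le) hsb hab
  have hℓab := hℓ _ (G.mem_edgeSet.2 hab)
  linarith

variable (ℓ) in
def baryCoord (v w : V) : ℝ :=
  pathProd G ℓ (hT.path v w).support

theorem baryCoord_self (v : V) : hT.baryCoord ℓ v v = 1 := by
  rw [baryCoord, path_self]
  rfl

theorem baryCoord_eq_mul {u v w : V} (h : G.Adj u v) (hw : w ∈ sideComp G u v) :
    hT.baryCoord ℓ u w =
      deviation G ℓ u v / (1 - deviation G ℓ v u) * hT.baryCoord ℓ v w := by
  rw [baryCoord, baryCoord, hT.path_eq_cons h hw, Walk.support_cons,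
    ← (hT.path v w).cons_tail_support]
  rfl

theorem sum_filter_sideComp_baryCoord_eq_mul {u v : V} (h : G.Adj u v) (s : Finset V) :
    ∑ w ∈ s.filter (· ∈ sideComp G u v), hT.baryCoord ℓ u w =
      deviation G ℓ u v / (1 - deviation G ℓ v u) *
        ∑ w ∈ s.filter (· ∈ sideComp G u v), hT.baryCoord ℓ v w := by
  rw [mul_sum]
  exact sum_congr rfl fun w hw => hT.baryCoord_eq_mul h (mem_filter.1 hw).2

theorem sum_filter_sideComp_baryCoord {u v : V} (hℓ : ∀ e ∈ G.edgeSet, 0 < ℓ e)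
    (hsb : ShortBranched G ℓ) (h : G.Adj u v) :
    ∑ w ∈ (leafSet G).filter (· ∈ sideComp G u v), hT.baryCoord ℓ u w = deviation G ℓ u v := by
  have hrec : ∀ y ∈ (G.neighborFinset v).erase u,
      ∑ w ∈ (leafSet G).filter (· ∈ sideComp G v y), hT.baryCoord ℓ v w = deviation G ℓ v y :=
    fun y hy => sum_filter_sideComp_baryCoord hℓ hsb
      ((G.mem_neighborFinset v y).1 (mem_of_mem_erase hy))
  have hu : u ∈ G.neighborFinset v := (G.mem_neighborFinset v u).2 h.symm
  have hall := hT.sum_eq_add_sum_sum_filter_sideComp v (leafSet G) (hT.baryCoord ℓ v)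
  rw [← add_sum_erase _ _ hu, sum_congr rfl hrec, hT.baryCoord_self] at hall
  have hdev := hT.sum_deviation hsb.1 v
  rw [← add_sum_erase _ _ hu] at hdev
  have hsplit :=
    hT.sum_filter_sideComp_add_sum_filter_sideComp h (leafSet G) (hT.baryCoord ℓ v)
  have hfar : ∑ w ∈ (leafSet G).filter (· ∈ sideComp G u v), hT.baryCoord ℓ v w =
      1 - deviation G ℓ v u := by
    linarith
  rw [hT.sum_filter_sideComp_baryCoord_eq_mul h, hfar,
    div_mul_cancel₀ _ (hT.one_sub_deviation_pos hℓ hsb h).ne']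
termination_by (sideComp G u v).ncard
decreasing_by
  exact hT.ncard_sideComp_lt h ((G.mem_neighborFinset v y).1 (mem_of_mem_erase hy))
    (ne_of_mem_erase hy)

end SimpleGraph.IsTree

theorem sum_barycentric_coordinates_general [Fintype V] (G : SimpleGraph V)
    (ℓ : Sym2 V → ℝ) (hT : G.IsTree)
    (hℓ : ∀ e ∈ G.edgeSet, 0 < ℓ e) (hsb : ShortBranched G ℓ)
    (v : V) (p : ∀ w : V, G.Walk v w) (hp : ∀ w, (p w).IsPath) :
    ∑ w ∈ leafSet G, pathProd G ℓ (p w).support = 1 := by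
  have hbary : ∀ w, pathProd G ℓ (p w).support = hT.baryCoord ℓ v w := fun w => by
    rw [IsTree.baryCoord, ← hT.eq_path (hp w)]
  rw [sum_congr rfl fun w _ => hbary w, hT.sum_eq_add_sum_sum_filter_sideComp v,
    hT.baryCoord_self, sum_congr rfl fun y hy => hT.sum_filter_sideComp_baryCoord hℓ hsb
      ((G.mem_neighborFinset v y).1 hy), hT.sum_deviation hsb.1 v]
  ring

/-- **The barycentric coordinates sum to one** (Lemma A.8 of the paper): in a
short-branched tree with strictly positive edge lengths, for any vertex `v`, the sum over
all leaves `w` of the barycentric coordinates `a(v,w)`, computed along the unique paths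
from `v` to the leaves, equals `1`. -/
theorem sum_barycentric_coordinates [Fintype V] [DecidableEq V] (G : SimpleGraph V)
    (ℓ : Sym2 V → ℝ) (hT : G.IsTree) (hV : 1 < Fintype.card V)
    (hℓ : ∀ e ∈ G.edgeSet, 0 < ℓ e) (hsb : ShortBranched G ℓ)
    (v : V) (p : ∀ w : V, G.Walk v w) (hp : ∀ w, (p w).IsPath) :
    ∑ w ∈ leafSet G, pathProd G ℓ (p w).support = 1 :=
  sum_barycentric_coordinates_general G ℓ hT hℓ hsb v p hp
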